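/- For |t|<1, d/dt [ (t²/2) · G(t) ] = (t/(1−t³)) · ₂F₁(2/3,2/3;4/3;t³), where G(t) = Σ_{m,n≥0} (2/3)_{m+n}/(5/3)_{m+n} · (2/3)_n(2/3)_n/((4/3)_n) · (1)_m/(m! n!) · t^{3(n+m)}. -/

import Mathlib

open scoped BigOperators

/-- The Pochhammer symbol `(a)ₙ = a(a+1)⋯(a+n−1)`. -/
noncomputable def poch (a : ℂ) (n : ℕ) : ℂ := ∏ i ∈ Finset.range n, (a + i)

/-- The Gauss hypergeometric series `₂F₁(a,b;c;x) = Σ (a)ₙ(b)ₙ/((c)ₙ n!) xⁿ`. -/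
noncomputable def F21 (a b c x : ℂ) : ℂ :=
  ∑' n : ℕ, poch a n * poch b n / (poch c n * (n.factorial : ℂ)) * x ^ n

/-- `G(t) = Σ_{m,n≥0} (2/3)_{m+n}/(5/3)_{m+n} · (2/3)ₙ(2/3)ₙ/(4/3)ₙ · (1)ₘ/(m! n!) · t^{3(n+m)}`,
summed over `p = (m, n) : ℕ × ℕ`. -/
noncomputable def kampeG (t : ℂ) : ℂ :=
  ∑' p : ℕ × ℕ,
    poch (2/3) (p.1 + p.2) / poch (5/3) (p.1 + p.2)
      * (poch (2/3) p.2 * poch (2/3) p.2 / poch (4/3) p.2)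
      * (poch 1 p.1 / ((p.1.factorial : ℂ) * (p.2.factorial : ℂ)))
      * t ^ (3 * (p.2 + p.1))

/-!
With `k = m + n`, the ratio `(2/3)ₖ/(5/3)ₖ` equals `2/(3k+2)` and `(1)ₘ/m! = 1`, so differentiating
`(t²/2)·G(t) = Σ cₘₙ/2 · t^(3k+2)` term by term turns the `(m, n)` term into `aₙ t^(3k+1)`,
where `aₙ` is the `n`-th coefficient of `₂F₁(2/3,2/3;4/3;·)`. The resulting double series factors
as `t · Σₘ t^(3m) · Σₙ aₙ t^(3n) = t/(1−t³) · ₂F₁(2/3,2/3;4/3;t³)`. Since `|aₙ| ≤ 1`, the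
derivative series is dominated by a product of geometric series on every smaller disc, which
justifies the termwise differentiation.
-/

open Finset

theorem poch_succ (a : ℂ) (n : ℕ) : poch a (n + 1) = poch a n * (a + n) :=
  prod_range_succ _ _

theorem poch_succ' (a : ℂ) (n : ℕ) : poch a (n + 1) = a * poch (a + 1) n := by
  simp only [poch, prod_range_succ', Nat.cast_add, Nat.cast_one, Nat.cast_zero, add_zero]
  rw [mul_comm]
  congr 1
  exact prod_congr rfl fun i _ => by ring

theorem poch_one (n : ℕ) : poch 1 n = n.factorial := by
  rw [poch, ← prod_range_add_one_eq_factorial]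
  push_cast
  exact prod_congr rfl fun i _ => add_comm _ _

theorem norm_poch_ofReal {a : ℝ} (ha : 0 ≤ a) (n : ℕ) :
    ‖poch a n‖ = ∏ i ∈ range n, (a + i) := by
  rw [poch, norm_prod]
  refine prod_congr rfl fun i _ => ?_
  rw [← Complex.ofReal_natCast, ← Complex.ofReal_add, Complex.norm_real,
    Real.norm_of_nonneg (by positivity)]

theorem norm_poch_le {a b : ℝ} (ha : 0 ≤ a) (hab : a ≤ b) (n : ℕ) :
    ‖poch a n‖ ≤ ‖poch b n‖ := by
  rw [norm_poch_ofReal ha, norm_poch_ofReal (ha.trans hab)]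
  exact prod_le_prod (fun i _ => by positivity) fun i _ => by linarith

theorem poch_ne_zero {a : ℝ} (ha : 0 < a) (n : ℕ) : poch a n ≠ 0 := by
  rw [← norm_pos_iff, norm_poch_ofReal ha.le]
  exact prod_pos fun i _ => by positivity

theorem poch_mul_add (a : ℂ) (n : ℕ) : poch a n * (a + n) = a * poch (a + 1) n := by
  rw [← poch_succ, poch_succ']

theorem hasDerivAt_tsum_mul_pow {ι 𝕜 : Type*} [RCLike 𝕜] (a : ι → 𝕜) (e : ι → ℕ)
    (he : ∀ i, e i ≠ 0) {R : ℝ}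
    (hsum : ∀ r : ℝ, 0 ≤ r → r < R → Summable fun i => ‖a i * e i‖ * r ^ (e i - 1))
    {t : 𝕜} (ht : ‖t‖ < R) :
    HasDerivAt (fun s => ∑' i, a i * s ^ e i) (∑' i, a i * e i * t ^ (e i - 1)) t := by
  obtain ⟨r, htr, hrR⟩ := exists_between ht
  have hr : 0 ≤ r := (norm_nonneg t).trans htr.le
  refine hasDerivAt_tsum_of_isPreconnected (g := fun i s => a i * s ^ e i)
    (g' := fun i s => a i * e i * s ^ (e i - 1)) (hsum r hr hrR) Metric.isOpen_ball
    (convex_ball (0 : 𝕜) r).isPreconnected (fun i y _ => ?_) (fun i y hy => ?_)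
    (Metric.mem_ball_self ((norm_nonneg t).trans_lt htr)) ?_ (mem_ball_zero_iff.2 htr)
  · simpa [mul_assoc] using (hasDerivAt_pow (e i) y).const_mul (a i)
  · rw [mul_assoc, norm_mul, norm_mul, norm_pow, ← mul_assoc, ← norm_mul]
    exact mul_le_mul_of_nonneg_left
      (pow_le_pow_left₀ (norm_nonneg y) (mem_ball_zero_iff.1 hy).le _) (norm_nonneg _)
  · simp [zero_pow (he _)]

noncomputable def F21Coeff (a b c : ℂ) (n : ℕ) : ℂ :=
  poch a n * poch b n / (poch c n * (n.factorial : ℂ))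

theorem F21_eq_tsum (a b c x : ℂ) : F21 a b c x = ∑' n, F21Coeff a b c n * x ^ n := rfl

theorem norm_F21Coeff_le_one {a b c : ℝ} (ha : 0 ≤ a) (hac : a ≤ c) (hb : 0 ≤ b) (hb1 : b ≤ 1)
    (n : ℕ) : ‖F21Coeff a b c n‖ ≤ 1 := by
  rw [F21Coeff, ← poch_one, ← Complex.ofReal_one, norm_div, norm_mul, norm_mul]
  exact div_le_one_of_le₀ (mul_le_mul (norm_poch_le ha hac n) (norm_poch_le hb hb1 n)
    (norm_nonneg _) (norm_nonneg _)) (by positivity)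

theorem summable_norm_F21Coeff_mul_pow {a b c : ℝ} (ha : 0 ≤ a) (hac : a ≤ c) (hb : 0 ≤ b)
    (hb1 : b ≤ 1) {x : ℂ} (hx : ‖x‖ < 1) :
    Summable fun n => ‖F21Coeff a b c n * x ^ n‖ := by
  refine .of_nonneg_of_le (fun n => norm_nonneg _) (fun n => ?_)
    (summable_geometric_of_lt_one (norm_nonneg x) hx)
  rw [norm_mul, norm_pow]
  exact mul_le_of_le_one_left (by positivity) (norm_F21Coeff_le_one ha hac hb hb1 n)

noncomputable def kampeCoeff (p : ℕ × ℕ) : ℂ :=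
  poch (2/3) (p.1 + p.2) / poch (5/3) (p.1 + p.2)
    * (poch (2/3) p.2 * poch (2/3) p.2 / poch (4/3) p.2)
    * (poch 1 p.1 / ((p.1.factorial : ℂ) * (p.2.factorial : ℂ)))

theorem kampeG_eq_tsum (t : ℂ) : kampeG t = ∑' p, kampeCoeff p * t ^ (3 * (p.2 + p.1)) := rfl

theorem kampeCoeff_div_two_mul (p : ℕ × ℕ) :
    kampeCoeff p / 2 * ((3 * (p.2 + p.1) + 2 : ℕ) : ℂ) = F21Coeff (2/3) (2/3) (4/3) p.2 := by
  obtain ⟨m, n⟩ := p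
  have hstep := poch_mul_add (2/3) (m + n)
  have h53 := poch_ne_zero (a := 5/3) (by norm_num) (m + n)
  have h43 := poch_ne_zero (a := 4/3) (by norm_num) n
  push_cast at h53 h43
  have hm : (m.factorial : ℂ) ≠ 0 := Nat.cast_ne_zero.2 m.factorial_ne_zero
  have hn : (n.factorial : ℂ) ≠ 0 := Nat.cast_ne_zero.2 n.factorial_ne_zero
  simp only [kampeCoeff, F21Coeff, poch_one]
  field_simp
  norm_num at hstep
  push_cast
  linear_combination (3 * poch (2/3) n * poch (2/3) n) * hstep

theorem half_sq_mul_kampeG (s : ℂ) :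
    s ^ 2 / 2 * kampeG s = ∑' p : ℕ × ℕ, kampeCoeff p / 2 * s ^ (3 * (p.2 + p.1) + 2) := by
  rw [kampeG_eq_tsum, ← tsum_mul_left]
  refine tsum_congr fun p => ?_
  rw [pow_add]
  ring

theorem norm_F21Coeff_two_thirds_le_one (n : ℕ) : ‖F21Coeff (2/3) (2/3) (4/3) n‖ ≤ 1 := by
  have h := norm_F21Coeff_le_one (a := 2/3) (b := 2/3) (c := 4/3)
    (by norm_num) (by norm_num) (by norm_num) (by norm_num) n
  push_cast at h
  exact h

theorem summable_norm_kampeCoeff_mul_pow {r : ℝ} (hr : 0 ≤ r) (hr1 : r < 1) :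
    Summable fun p : ℕ × ℕ => ‖kampeCoeff p / 2 * ((3 * (p.2 + p.1) + 2 : ℕ) : ℂ)‖
      * r ^ (3 * (p.2 + p.1) + 2 - 1) := by
  have hgeo := summable_geometric_of_lt_one (by positivity) (pow_lt_one₀ hr hr1 three_ne_zero)
  refine .of_nonneg_of_le (fun p => by positivity) (fun p => ?_)
    (hgeo.mul_of_nonneg hgeo (fun _ => by positivity) (fun _ => by positivity))
  rw [kampeCoeff_div_two_mul, ← pow_mul, ← pow_mul, ← pow_add]
  exact (mul_le_of_le_one_left (by positivity) (norm_F21Coeff_two_thirds_le_one p.2)).trans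
    (pow_le_pow_of_le_one hr hr1.le (by omega))

theorem tsum_kampeCoeff_derivative {t : ℂ} (ht : ‖t‖ < 1) :
    ∑' p : ℕ × ℕ, kampeCoeff p / 2 * ((3 * (p.2 + p.1) + 2 : ℕ) : ℂ)
        * t ^ (3 * (p.2 + p.1) + 2 - 1)
      = t / (1 - t ^ 3) * F21 (2/3) (2/3) (4/3) (t ^ 3) := by
  have ht3 : ‖t ^ 3‖ < 1 := by
    rw [norm_pow]
    exact pow_lt_one₀ (norm_nonneg t) ht three_ne_zero
  have hF21 := summable_norm_F21Coeff_mul_pow (a := 2/3) (b := 2/3) (c := 4/3)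
    (by norm_num) (by norm_num) (by norm_num) (by norm_num) ht3
  push_cast at hF21
  have hgeo : Summable fun m : ℕ => ‖(t ^ 3) ^ m‖ :=
    (summable_geometric_of_lt_one (norm_nonneg _) ht3).congr fun m => (norm_pow _ _).symm
  calc _ = ∑' p : ℕ × ℕ,
        t * ((t ^ 3) ^ p.1 * (F21Coeff (2/3) (2/3) (4/3) p.2 * (t ^ 3) ^ p.2)) := by
        refine tsum_congr fun p => ?_
        rw [kampeCoeff_div_two_mul, show 3 * (p.2 + p.1) + 2 - 1 = 3 * p.1 + 3 * p.2 + 1 by omega]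
        ring
    _ = t * ((∑' m : ℕ, (t ^ 3) ^ m) * ∑' n : ℕ, F21Coeff (2/3) (2/3) (4/3) n * (t ^ 3) ^ n) := by
        rw [tsum_mul_left, tsum_mul_tsum_of_summable_norm hgeo hF21]
    _ = t / (1 - t ^ 3) * F21 (2/3) (2/3) (4/3) (t ^ 3) := by
        rw [tsum_geometric_of_norm_lt_one ht3, F21_eq_tsum]
        ring

/-- For `|t| < 1`, `d/dt [(t²/2)·G(t)] = (t/(1−t³))·₂F₁(2/3,2/3;4/3;t³)`. -/
theorem primitive_two (t : ℂ) (ht : ‖t‖ < 1) :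
    HasDerivAt (fun s : ℂ => s ^ 2 / 2 * kampeG s)
      (t / (1 - t ^ 3) * F21 (2/3) (2/3) (4/3) (t ^ 3)) t := by
  simp only [half_sq_mul_kampeG]
  rw [← tsum_kampeCoeff_derivative ht]
  exact hasDerivAt_tsum_mul_pow _ _ (fun _ => by omega)
    (fun _ hr hr1 => summable_norm_kampeCoeff_mul_pow hr hr1) ht
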